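/- arXiv:1608.06072 — 4 statements merged into one kernel-verified Lean document; each statement's English description precedes it below -/
import Mathlib

section
/- For any three discrete random variables Z, H₁, H₂ on finite spaces, J(Z; (H₁,H₂)) ≤ J(Z; H₁) + J(Z; H₂ | H₁), where J denotes variational information and J(·;·|·) denotes conditional variational information. -/
open scoped Classical BigOperators

/-- `μ` is a probability mass function on a finite type. -/
def IsPMF {Ω : Type*} [Fintype Ω] (μ : Ω → ℝ) : Prop :=
  (∀ ω, 0 ≤ μ ω) ∧ ∑ ω, μ ω = 1

/-- Probability that the random variable `X` takes the value `a` under `μ`. -/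
noncomputable def pr {Ω α : Type*} [Fintype Ω] (μ : Ω → ℝ) (X : Ω → α) (a : α) : ℝ :=
  ∑ ω, if X ω = a then μ ω else 0

/-- Variational information `J(X;Y)`: total variation distance between the joint
law of `(X,Y)` and the product of the marginal laws. -/
noncomputable def vinfo {Ω α β : Type*} [Fintype Ω] [Fintype α] [Fintype β]
    (μ : Ω → ℝ) (X : Ω → α) (Y : Ω → β) : ℝ :=
  (1/2) * ∑ a, ∑ b, |pr μ (fun ω => (X ω, Y ω)) (a, b) - pr μ X a * pr μ Y b|

/-- Conditional variational information `J(X;Y|W)`: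
`E_W[d_TV(P(X,Y|W), P(X|W)⊗P(Y|W))]`. -/
noncomputable def condVinfo {Ω α β γ : Type*} [Fintype Ω] [Fintype α] [Fintype β] [Fintype γ]
    (μ : Ω → ℝ) (X : Ω → α) (Y : Ω → β) (W : Ω → γ) : ℝ :=
  (1/2) * ∑ c, ∑ a, ∑ b,
    |pr μ (fun ω => (X ω, Y ω, W ω)) (a, b, c) -
      pr μ (fun ω => (X ω, W ω)) (a, c) * pr μ (fun ω => (Y ω, W ω)) (b, c) / pr μ W c|

lemma pr_nonneg {Ω α : Type*} [Fintype Ω] {μ : Ω → ℝ} (h : ∀ ω, 0 ≤ μ ω)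
    (X : Ω → α) (a : α) : 0 ≤ pr μ X a :=
  Finset.sum_nonneg fun ω _ => by by_cases hx : X ω = a <;> simp [hx, h ω]

lemma pr_marg_right {Ω α β : Type*} [Fintype Ω] [Fintype β] (μ : Ω → ℝ)
    (X : Ω → α) (Y : Ω → β) (a : α) :
    ∑ b, pr μ (fun ω => (X ω, Y ω)) (a, b) = pr μ X a := by
  unfold pr
  rw [Finset.sum_comm]
  refine Finset.sum_congr rfl fun ω _ => ?_
  by_cases hx : X ω = a <;> simp [Prod.ext_iff, hx]

lemma pr_zero_mu {Ω α : Type*} [Fintype Ω] {μ : Ω → ℝ} (h : ∀ ω, 0 ≤ μ ω)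
    {X : Ω → α} {a : α} (hz : pr μ X a = 0) : ∀ ω, X ω = a → μ ω = 0 := by
  intro ω hω
  have := (Finset.sum_eq_zero_iff_of_nonneg (fun ω _ => by
    by_cases hx : X ω = a <;> simp [hx, h ω])).mp hz ω (Finset.mem_univ ω)
  simpa [hω] using this

/-- Chain rule for variational information (two-step case):
`J(Z;(H₁,H₂)) ≤ J(Z;H₁) + J(Z;H₂|H₁)`. -/
theorem chain_rule_two {Ω 𝒵 ℋ₁ ℋ₂ : Type*} [Fintype Ω] [Fintype 𝒵] [Fintype ℋ₁] [Fintype ℋ₂]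
    (μ : Ω → ℝ) (hμ : IsPMF μ) (Z : Ω → 𝒵) (H₁ : Ω → ℋ₁) (H₂ : Ω → ℋ₂) :
    vinfo μ Z (fun ω => (H₁ ω, H₂ ω)) ≤ vinfo μ Z H₁ + condVinfo μ Z H₂ H₁ := by
  obtain ⟨hμ0, -⟩ := hμ
  have key : ∀ (z : 𝒵) (h1 : ℋ₁),
      ∑ h2, |pr μ (fun ω => (Z ω, H₁ ω, H₂ ω)) (z, h1, h2)
        - pr μ Z z * pr μ (fun ω => (H₁ ω, H₂ ω)) (h1, h2)|
      ≤ (∑ h2, |pr μ (fun ω => (Z ω, H₂ ω, H₁ ω)) (z, h2, h1) -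
          pr μ (fun ω => (Z ω, H₁ ω)) (z, h1)
            * pr μ (fun ω => (H₂ ω, H₁ ω)) (h2, h1) / pr μ H₁ h1|)
        + |pr μ (fun ω => (Z ω, H₁ ω)) (z, h1) - pr μ Z z * pr μ H₁ h1| := by
    intro z h1
    have hAA : ∀ h2 : ℋ₂, pr μ (fun ω => (Z ω, H₂ ω, H₁ ω)) (z, h2, h1)
        = pr μ (fun ω => (Z ω, H₁ ω, H₂ ω)) (z, h1, h2) := by
      intro h2
      refine Finset.sum_congr rfl fun ω _ => ?_
      by_cases ha : Z ω = z <;> by_cases hb : H₁ ω = h1 <;> by_cases hc : H₂ ω = h2 <;>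
        simp [Prod.ext_iff, ha, hb, hc]
    have hEC : ∀ h2 : ℋ₂, pr μ (fun ω => (H₂ ω, H₁ ω)) (h2, h1)
        = pr μ (fun ω => (H₁ ω, H₂ ω)) (h1, h2) := by
      intro h2
      refine Finset.sum_congr rfl fun ω _ => ?_
      by_cases hb : H₁ ω = h1 <;> by_cases hc : H₂ ω = h2 <;>
        simp [Prod.ext_iff, hb, hc]
    by_cases hF : pr μ H₁ h1 = 0
    · have hmu0 := pr_zero_mu hμ0 hF
      have hA : ∀ h2 : ℋ₂, pr μ (fun ω => (Z ω, H₁ ω, H₂ ω)) (z, h1, h2) = 0 := by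
        intro h2
        refine Finset.sum_eq_zero fun ω _ => ?_
        by_cases hc : (Z ω, H₁ ω, H₂ ω) = (z, h1, h2)
        · rw [if_pos hc]
          have hc' : Z ω = z ∧ H₁ ω = h1 ∧ H₂ ω = h2 := by simpa [Prod.ext_iff] using hc
          exact hmu0 ω hc'.2.1
        · simp [hc]
      have hC : ∀ h2 : ℋ₂, pr μ (fun ω => (H₁ ω, H₂ ω)) (h1, h2) = 0 := by
        intro h2
        refine Finset.sum_eq_zero fun ω _ => ?_
        by_cases hc : (H₁ ω, H₂ ω) = (h1, h2)
        · rw [if_pos hc]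
          have hc' : H₁ ω = h1 ∧ H₂ ω = h2 := by simpa [Prod.ext_iff] using hc
          exact hmu0 ω hc'.1
        · simp [hc]
      have hD : pr μ (fun ω => (Z ω, H₁ ω)) (z, h1) = 0 := by
        refine Finset.sum_eq_zero fun ω _ => ?_
        by_cases hc : (Z ω, H₁ ω) = (z, h1)
        · rw [if_pos hc]
          have hc' : Z ω = z ∧ H₁ ω = h1 := by simpa [Prod.ext_iff] using hc
          exact hmu0 ω hc'.2
        · simp [hc]
      simp [hA, hC, hD, hF, hAA]
    · have hFpos : 0 < pr μ H₁ h1 :=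
        lt_of_le_of_ne (pr_nonneg hμ0 _ _) (Ne.symm hF)
      have step : ∀ h2 : ℋ₂,
          |pr μ (fun ω => (Z ω, H₁ ω, H₂ ω)) (z, h1, h2)
            - pr μ Z z * pr μ (fun ω => (H₁ ω, H₂ ω)) (h1, h2)|
          ≤ |pr μ (fun ω => (Z ω, H₁ ω, H₂ ω)) (z, h1, h2) -
              pr μ (fun ω => (Z ω, H₁ ω)) (z, h1)
                * pr μ (fun ω => (H₁ ω, H₂ ω)) (h1, h2) / pr μ H₁ h1|
            + pr μ (fun ω => (H₁ ω, H₂ ω)) (h1, h2) / pr μ H₁ h1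
              * |pr μ (fun ω => (Z ω, H₁ ω)) (z, h1) - pr μ Z z * pr μ H₁ h1| := by
        intro h2
        have heq : pr μ (fun ω => (Z ω, H₁ ω)) (z, h1)
              * pr μ (fun ω => (H₁ ω, H₂ ω)) (h1, h2) / pr μ H₁ h1
            - pr μ Z z * pr μ (fun ω => (H₁ ω, H₂ ω)) (h1, h2)
            = pr μ (fun ω => (H₁ ω, H₂ ω)) (h1, h2) / pr μ H₁ h1
              * (pr μ (fun ω => (Z ω, H₁ ω)) (z, h1) - pr μ Z z * pr μ H₁ h1) := by
          field_simp
        calc |pr μ (fun ω => (Z ω, H₁ ω, H₂ ω)) (z, h1, h2)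
              - pr μ Z z * pr μ (fun ω => (H₁ ω, H₂ ω)) (h1, h2)|
            ≤ |pr μ (fun ω => (Z ω, H₁ ω, H₂ ω)) (z, h1, h2) -
                pr μ (fun ω => (Z ω, H₁ ω)) (z, h1)
                  * pr μ (fun ω => (H₁ ω, H₂ ω)) (h1, h2) / pr μ H₁ h1|
              + |pr μ (fun ω => (Z ω, H₁ ω)) (z, h1)
                  * pr μ (fun ω => (H₁ ω, H₂ ω)) (h1, h2) / pr μ H₁ h1
                - pr μ Z z * pr μ (fun ω => (H₁ ω, H₂ ω)) (h1, h2)| :=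
              abs_sub_le _ _ _
          _ = _ := by
              rw [heq, abs_mul,
                abs_of_nonneg (div_nonneg (pr_nonneg hμ0 _ _) hFpos.le)]
      calc ∑ h2, |pr μ (fun ω => (Z ω, H₁ ω, H₂ ω)) (z, h1, h2)
            - pr μ Z z * pr μ (fun ω => (H₁ ω, H₂ ω)) (h1, h2)|
          ≤ ∑ h2, (|pr μ (fun ω => (Z ω, H₁ ω, H₂ ω)) (z, h1, h2) -
                pr μ (fun ω => (Z ω, H₁ ω)) (z, h1)
                  * pr μ (fun ω => (H₁ ω, H₂ ω)) (h1, h2) / pr μ H₁ h1|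
              + pr μ (fun ω => (H₁ ω, H₂ ω)) (h1, h2) / pr μ H₁ h1
                * |pr μ (fun ω => (Z ω, H₁ ω)) (z, h1) - pr μ Z z * pr μ H₁ h1|) :=
            Finset.sum_le_sum fun h2 _ => step h2
        _ = (∑ h2, |pr μ (fun ω => (Z ω, H₁ ω, H₂ ω)) (z, h1, h2) -
                pr μ (fun ω => (Z ω, H₁ ω)) (z, h1)
                  * pr μ (fun ω => (H₁ ω, H₂ ω)) (h1, h2) / pr μ H₁ h1|)
            + ((∑ h2, pr μ (fun ω => (H₁ ω, H₂ ω)) (h1, h2)) / pr μ H₁ h1)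
              * |pr μ (fun ω => (Z ω, H₁ ω)) (z, h1) - pr μ Z z * pr μ H₁ h1| := by
            rw [Finset.sum_add_distrib, ← Finset.sum_mul, ← Finset.sum_div]
        _ = _ := by
            rw [pr_marg_right μ H₁ H₂ h1, div_self hF, one_mul]
            congr 1
            exact Finset.sum_congr rfl fun h2 _ => by rw [hAA, hEC]
  have lhs_eq : vinfo μ Z (fun ω => (H₁ ω, H₂ ω))
      = (1/2) * ∑ z, ∑ h1, ∑ h2, |pr μ (fun ω => (Z ω, H₁ ω, H₂ ω)) (z, h1, h2)
          - pr μ Z z * pr μ (fun ω => (H₁ ω, H₂ ω)) (h1, h2)| := by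
    unfold vinfo
    congr 1
    exact Finset.sum_congr rfl fun z _ => by rw [Fintype.sum_prod_type]
  rw [lhs_eq]
  have h2 : (1/2 : ℝ) * ∑ z, ∑ h1, ∑ h2,
        |pr μ (fun ω => (Z ω, H₁ ω, H₂ ω)) (z, h1, h2)
          - pr μ Z z * pr μ (fun ω => (H₁ ω, H₂ ω)) (h1, h2)|
      ≤ (1/2) * ∑ z, ∑ h1,
        ((∑ h2, |pr μ (fun ω => (Z ω, H₂ ω, H₁ ω)) (z, h2, h1) -
            pr μ (fun ω => (Z ω, H₁ ω)) (z, h1)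
              * pr μ (fun ω => (H₂ ω, H₁ ω)) (h2, h1) / pr μ H₁ h1|)
          + |pr μ (fun ω => (Z ω, H₁ ω)) (z, h1) - pr μ Z z * pr μ H₁ h1|) := by
    gcongr with z _ h1 _
    exact key z h1
  refine h2.trans (le_of_eq ?_)
  rw [show vinfo μ Z H₁ + condVinfo μ Z H₂ H₁ = condVinfo μ Z H₂ H₁ + vinfo μ Z H₁
      from add_comm _ _]
  unfold condVinfo vinfo
  rw [← mul_add]
  congr 1
  rw [Finset.sum_comm (f := fun c a => ∑ b,
    |pr μ (fun ω => (Z ω, H₂ ω, H₁ ω)) (a, b, c) -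
      pr μ (fun ω => (Z ω, H₁ ω)) (a, c) * pr μ (fun ω => (H₂ ω, H₁ ω)) (b, c) / pr μ H₁ c|),
    ← Finset.sum_add_distrib]
  refine Finset.sum_congr rfl fun z _ => ?_
  rw [← Finset.sum_add_distrib]
end

section
/- If discrete random variables A, B, C on finite spaces form a Markov chain A → B → C (i.e., A and C are conditionally independent given B), then J(A; C) ≤ J(A; B) (data processing inequality for variational information). -/
open scoped Classical BigOperators

lemma pr_pair_le {Ω α β : Type*} [Fintype Ω] {μ : Ω → ℝ} (h : ∀ ω, 0 ≤ μ ω)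
    (X : Ω → α) (Y : Ω → β) (a : α) (b : β) :
    pr μ (fun ω => (X ω, Y ω)) (a, b) ≤ pr μ Y b := by
  apply Finset.sum_le_sum
  intro ω _
  split_ifs with h1 h2 h2
  · exact le_rfl
  · exact absurd (Prod.ext_iff.1 h1).2 h2
  · exact h ω
  · exact le_rfl

lemma pr_snd {Ω α β : Type*} [Fintype Ω] [Fintype α] [Fintype β] (μ : Ω → ℝ)
    (X : Ω → α) (Y : Ω → β) (b : β) :
    ∑ a, pr μ (fun ω => (X ω, Y ω)) (a, b) = pr μ Y b := by
  unfold pr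
  rw [Finset.sum_comm]
  apply Finset.sum_congr rfl
  intro ω _
  simp [Prod.ext_iff, ite_and, Finset.sum_ite_eq]

lemma pr_fst {Ω α β : Type*} [Fintype Ω] [Fintype α] [Fintype β] (μ : Ω → ℝ)
    (X : Ω → α) (Y : Ω → β) (a : α) :
    ∑ b, pr μ (fun ω => (X ω, Y ω)) (a, b) = pr μ X a := by
  unfold pr
  rw [Finset.sum_comm]
  apply Finset.sum_congr rfl
  intro ω _
  simp [Prod.ext_iff, ite_and, Finset.sum_ite_eq]

lemma pr_triple {Ω α β γ : Type*} [Fintype Ω] [Fintype α] [Fintype β] [Fintype γ] (μ : Ω → ℝ)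
    (X : Ω → α) (Y : Ω → β) (Z : Ω → γ) (a : α) (c : β) :
    ∑ b, pr μ (fun ω => (X ω, Y ω, Z ω)) (a, c, b) = pr μ (fun ω => (X ω, Y ω)) (a, c) := by
  unfold pr
  rw [Finset.sum_comm]
  apply Finset.sum_congr rfl
  intro ω _
  simp [Prod.ext_iff, ite_and, Finset.sum_ite_eq]

/-- Data processing inequality for variational information: if `A → B → C`
is a Markov chain (i.e. `A` and `C` are conditionally independent given `B`),
then `J(A;C) ≤ J(A;B)`. -/
theorem data_processing {Ω 𝒜 ℬ 𝒞 : Type*} [Fintype Ω] [Fintype 𝒜] [Fintype ℬ] [Fintype 𝒞]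
    (μ : Ω → ℝ) (hμ : IsPMF μ) (A : Ω → 𝒜) (B : Ω → ℬ) (C : Ω → 𝒞)
    (hMarkov : ∀ (a : 𝒜) (b : ℬ) (c : 𝒞),
      pr μ (fun ω => (A ω, C ω, B ω)) (a, c, b) * pr μ B b =
        pr μ (fun ω => (A ω, B ω)) (a, b) * pr μ (fun ω => (C ω, B ω)) (c, b)) :
    vinfo μ A C ≤ vinfo μ A B := by
  obtain ⟨hpos, -⟩ := hμ
  have key : ∀ (a : 𝒜) (c : 𝒞) (b : ℬ),
      pr μ (fun ω => (A ω, C ω, B ω)) (a, c, b) - pr μ A a * pr μ (fun ω => (C ω, B ω)) (c, b)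
        = (pr μ (fun ω => (A ω, B ω)) (a, b) - pr μ A a * pr μ B b) *
          (pr μ (fun ω => (C ω, B ω)) (c, b) / pr μ B b) := by
    intro a c b
    rcases eq_or_ne (pr μ B b) 0 with hb | hb
    · have hcb : pr μ (fun ω => (C ω, B ω)) (c, b) = 0 :=
        le_antisymm (hb ▸ pr_pair_le hpos C B c b) (pr_nonneg hpos _ _)
      have hacb : pr μ (fun ω => (A ω, C ω, B ω)) (a, c, b) = 0 := by
        refine le_antisymm ?_ (pr_nonneg hpos _ _)
        calc pr μ (fun ω => (A ω, C ω, B ω)) (a, c, b)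
            ≤ pr μ (fun ω => (C ω, B ω)) (c, b) := by
              apply Finset.sum_le_sum
              intro ω _
              split_ifs with h1 h2 h2
              · exact le_rfl
              · exact absurd (Prod.ext_iff.1 h1).2 h2
              · exact hpos ω
              · exact le_rfl
          _ = 0 := hcb
      rw [hcb, hacb, hb]; ring
    · have h3 : pr μ (fun ω => (A ω, C ω, B ω)) (a, c, b)
          = pr μ (fun ω => (A ω, B ω)) (a, b) * pr μ (fun ω => (C ω, B ω)) (c, b) / pr μ B b := by
        field_simp
        exact hMarkov a b c
      rw [h3]; field_simp
  have hdivnn : ∀ (c : 𝒞) (b : ℬ), 0 ≤ pr μ (fun ω => (C ω, B ω)) (c, b) / pr μ B b :=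
    fun c b => div_nonneg (pr_nonneg hpos _ _) (pr_nonneg hpos _ _)
  have step1 : vinfo μ A C ≤ (1/2) * ∑ a, ∑ c, ∑ b,
      |pr μ (fun ω => (A ω, B ω)) (a, b) - pr μ A a * pr μ B b| *
        (pr μ (fun ω => (C ω, B ω)) (c, b) / pr μ B b) := by
    unfold vinfo
    apply mul_le_mul_of_nonneg_left _ (by norm_num : (0:ℝ) ≤ 1/2)
    apply Finset.sum_le_sum
    intro a _
    apply Finset.sum_le_sum
    intro c _
    have hrw : pr μ (fun ω => (A ω, C ω)) (a, c) - pr μ A a * pr μ C c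
        = ∑ b, ((pr μ (fun ω => (A ω, B ω)) (a, b) - pr μ A a * pr μ B b) *
          (pr μ (fun ω => (C ω, B ω)) (c, b) / pr μ B b)) := by
      rw [← pr_triple μ A C B a c, ← pr_fst μ C B c]
      rw [Finset.mul_sum, ← Finset.sum_sub_distrib]
      exact Finset.sum_congr rfl fun b _ => key a c b
    rw [hrw]
    calc |∑ b, ((pr μ (fun ω => (A ω, B ω)) (a, b) - pr μ A a * pr μ B b) *
          (pr μ (fun ω => (C ω, B ω)) (c, b) / pr μ B b))|
        ≤ ∑ b, |(pr μ (fun ω => (A ω, B ω)) (a, b) - pr μ A a * pr μ B b) *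
          (pr μ (fun ω => (C ω, B ω)) (c, b) / pr μ B b)| := Finset.abs_sum_le_sum_abs _ _
      _ = ∑ b, |pr μ (fun ω => (A ω, B ω)) (a, b) - pr μ A a * pr μ B b| *
          (pr μ (fun ω => (C ω, B ω)) (c, b) / pr μ B b) := by
          apply Finset.sum_congr rfl
          intro b _
          rw [abs_mul, abs_of_nonneg (hdivnn c b)]
  refine step1.trans ?_
  unfold vinfo
  apply mul_le_mul_of_nonneg_left _ (by norm_num : (0:ℝ) ≤ 1/2)
  apply Finset.sum_le_sum
  intro a _
  rw [Finset.sum_comm]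
  apply Finset.sum_le_sum
  intro b _
  rw [← Finset.mul_sum, ← Finset.sum_div, pr_snd μ C B b]
  rcases eq_or_ne (pr μ B b) 0 with hb | hb
  · rw [hb, div_zero, mul_zero]
    exact abs_nonneg _
  · rw [div_self hb, mul_one]
end

section
/- Let L : 𝒵 × ℋ → [0,1] be a loss, S_m an i.i.d. sample, H a hypothesis depending on S_m, and Z_trn a uniformly random element of S_m. Then the expected generalization gap satisfies |E[R_emp(H;S_m) − R_true(H)]| ≤ J(Z_trn; H), where J is variational information (all spaces finite). -/
open scoped Classical BigOperators

/-- Joint law of `(Z_trn, H)` on a finite probability space: `Z_trn` is the sample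
entry at a uniformly random index. -/
noncomputable def jointZtrnH {Ω 𝒵 ℋ : Type*} [Fintype Ω] [Fintype 𝒵] [Fintype ℋ] {m : ℕ}
    (μ : Ω → ℝ) (Zs : Ω → Fin m → 𝒵) (H : Ω → ℋ) (z : 𝒵) (h : ℋ) : ℝ :=
  (1 / (m : ℝ)) * ∑ i : Fin m, pr μ (fun ω => (Zs ω i, H ω)) (z, h)

lemma pr_sum_eq_one {Ω α : Type*} [Fintype Ω] [Fintype α] (μ : Ω → ℝ)
    (hμ : ∑ ω, μ ω = 1) (X : Ω → α) : ∑ a, pr μ X a = 1 := by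
  unfold pr; rw [Finset.sum_comm]; simpa using hμ

lemma sum_pr_mul {Ω α : Type*} [Fintype Ω] [Fintype α] (μ : Ω → ℝ) (X : Ω → α) (g : α → ℝ) :
    ∑ a, pr μ X a * g a = ∑ ω, μ ω * g (X ω) := by
  simp only [pr, Finset.sum_mul]
  rw [Finset.sum_comm]
  refine Finset.sum_congr rfl fun ω _ => ?_
  simp [ite_mul]

lemma pr_comp {Ω α β : Type*} [Fintype Ω] [Fintype α] [Fintype β] (μ : Ω → ℝ)
    (X : Ω → α) (f : α → β) (b : β) :
    pr μ (fun ω => f (X ω)) b = ∑ a, if f a = b then pr μ X a else 0 := by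
  unfold pr
  have : ∀ a : α, (if f a = b then ∑ ω, if X ω = a then μ ω else 0 else 0) =
      ∑ ω, if X ω = a ∧ f a = b then μ ω else 0 := by
    intro a; split <;> rename_i hfa <;> simp [hfa]
  simp only [this]
  rw [Finset.sum_comm]
  refine Finset.sum_congr rfl fun ω _ => ?_
  rw [Finset.sum_eq_single (X ω)] <;> simp +contextual [eq_comm]

lemma abs_sum_mul_le {ι : Type*} [Fintype ι] (D f : ι → ℝ) (hD : ∑ i, D i = 0)
    (hf : ∀ i, f i ∈ Set.Icc (0:ℝ) 1) :
    |∑ i, D i * f i| ≤ (1/2) * ∑ i, |D i| := by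
  have h1 : ∑ i, D i * f i = ∑ i, D i * (f i - 1/2) := by
    simp only [mul_sub, Finset.sum_sub_distrib, ← Finset.sum_mul, hD]
    ring
  calc |∑ i, D i * f i| = |∑ i, D i * (f i - 1/2)| := by rw [h1]
    _ ≤ ∑ i, |D i * (f i - 1/2)| := Finset.abs_sum_le_sum_abs _ _
    _ ≤ ∑ i, |D i| * (1/2) := by
        refine Finset.sum_le_sum fun i _ => ?_
        rw [abs_mul]
        refine mul_le_mul_of_nonneg_left ?_ (abs_nonneg _)
        obtain ⟨h0, h1'⟩ := hf i
        rw [abs_le]; constructor <;> linarith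
    _ = (1/2) * ∑ i, |D i| := by rw [← Finset.sum_mul]; ring

lemma marg_of_iid {Ω 𝒵 : Type*} [Fintype Ω] [Fintype 𝒵] {m : ℕ}
    (μ : Ω → ℝ) (Zs : Ω → Fin m → 𝒵) (q : 𝒵 → ℝ) (hq : ∑ z, q z = 1)
    (hiid : ∀ z : Fin m → 𝒵, pr μ Zs z = ∏ i, q (z i)) (i : Fin m) (z : 𝒵) :
    pr μ (fun ω => Zs ω i) z = q z := by
  rw [pr_comp μ Zs (fun w => w i) z]
  simp only [hiid]
  have key : ∀ w : Fin m → 𝒵, (if w i = z then ∏ j, q (w j) else 0) =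
      ∏ j, (if j = i then (if w j = z then q (w j) else 0) else q (w j)) := by
    intro w
    by_cases hw : w i = z
    · rw [if_pos hw]
      refine (Finset.prod_congr rfl fun j _ => ?_).symm
      split <;> rename_i hj
      · subst hj; rw [if_pos hw]
      · rfl
    · rw [if_neg hw]
      symm
      apply Finset.prod_eq_zero (Finset.mem_univ i)
      simp [hw]
  simp only [key]
  rw [show (Finset.univ : Finset (Fin m → 𝒵)) = Fintype.piFinset (fun _ => Finset.univ) from
    (Fintype.piFinset_univ).symm,
    ← Finset.prod_univ_sum (fun _ : Fin m => (Finset.univ : Finset 𝒵))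
      (fun j a => if j = i then (if a = z then q a else 0) else q a)]
  rw [Finset.prod_eq_single i]
  · simp
  · intro j _ hj; simp [hj, hq]
  · intro h; exact absurd (Finset.mem_univ i) h


/-- The expected generalization gap is bounded by the variational information
`J(Z_trn;H)` between a random training example and the hypothesis. -/
theorem expected_gap_le_vinfo {Ω 𝒵 ℋ : Type*} [Fintype Ω] [Fintype 𝒵] [Fintype ℋ]
    (m : ℕ) (hm : 0 < m) (μ : Ω → ℝ) (hμ : IsPMF μ)
    (Zs : Ω → Fin m → 𝒵) (q : 𝒵 → ℝ) (hq : IsPMF q)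
    (hiid : ∀ z : Fin m → 𝒵, pr μ Zs z = ∏ i, q (z i))
    (H : Ω → ℋ) (L : 𝒵 → ℋ → ℝ) (hL : ∀ z h, L z h ∈ Set.Icc (0:ℝ) 1) :
    |∑ ω, μ ω * (((1 / (m : ℝ)) * ∑ i, L (Zs ω i) (H ω)) - ∑ z, q z * L z (H ω))| ≤
      (1/2) * ∑ z, ∑ h, |jointZtrnH μ Zs H z h -
        (∑ h', jointZtrnH μ Zs H z h') * (∑ z', jointZtrnH μ Zs H z' h)| := by
  have hm' : (m : ℝ) ≠ 0 := Nat.cast_ne_zero.mpr hm.ne'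
  set P := jointZtrnH μ Zs H with hP
  -- marginals of P
  have margZ : ∀ z, ∑ h', P z h' = q z := by
    intro z
    simp only [hP, jointZtrnH, ← Finset.mul_sum]
    rw [Finset.sum_comm]
    have : ∀ i : Fin m, ∑ h', pr μ (fun ω => (Zs ω i, H ω)) (z, h') = q z := fun i => by
      rw [pr_fst, marg_of_iid μ Zs q hq.2 hiid]
    simp only [this, Finset.sum_const, Finset.card_univ, Fintype.card_fin, nsmul_eq_mul]
    field_simp
  have margH : ∀ h, ∑ z', P z' h = pr μ H h := by
    intro h
    simp only [hP, jointZtrnH, ← Finset.mul_sum]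
    rw [Finset.sum_comm]
    have : ∀ i : Fin m, ∑ z', pr μ (fun ω => (Zs ω i, H ω)) (z', h) = pr μ H h := fun i =>
      pr_snd μ _ _ _
    simp only [this, Finset.sum_const, Finset.card_univ, Fintype.card_fin, nsmul_eq_mul]
    field_simp
  -- expectation as sum over pairs
  have key1 : ∀ i : Fin m, ∑ p : 𝒵 × ℋ, pr μ (fun ω => (Zs ω i, H ω)) p * L p.1 p.2 =
      ∑ ω, μ ω * L (Zs ω i) (H ω) := fun i =>
    sum_pr_mul μ (fun ω => (Zs ω i, H ω)) (fun p => L p.1 p.2)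
  have expA : ∑ ω, μ ω * ((1 / (m : ℝ)) * ∑ i, L (Zs ω i) (H ω)) =
      ∑ p : 𝒵 × ℋ, P p.1 p.2 * L p.1 p.2 := by
    symm
    calc ∑ p : 𝒵 × ℋ, P p.1 p.2 * L p.1 p.2
        = ∑ p : 𝒵 × ℋ, ∑ i, (1/(m:ℝ)) * (pr μ (fun ω => (Zs ω i, H ω)) p * L p.1 p.2) := by
          refine Finset.sum_congr rfl fun p _ => ?_
          simp only [hP, jointZtrnH, Prod.mk.eta, Finset.mul_sum, Finset.sum_mul, mul_assoc]
      _ = ∑ i, (1/(m:ℝ)) * ∑ p : 𝒵 × ℋ, pr μ (fun ω => (Zs ω i, H ω)) p * L p.1 p.2 := by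
          rw [Finset.sum_comm]; simp only [Finset.mul_sum]
      _ = ∑ i, (1/(m:ℝ)) * ∑ ω, μ ω * L (Zs ω i) (H ω) := by simp only [key1]
      _ = ∑ ω, μ ω * ((1/(m:ℝ)) * ∑ i, L (Zs ω i) (H ω)) := by
          simp only [Finset.mul_sum]
          rw [Finset.sum_comm]
          exact Finset.sum_congr rfl fun ω _ => Finset.sum_congr rfl fun i _ => by ring
  have expB : ∑ ω, μ ω * ∑ z, q z * L z (H ω) =
      ∑ p : 𝒵 × ℋ, q p.1 * pr μ H p.2 * L p.1 p.2 := by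
    rw [← sum_pr_mul μ H (fun h => ∑ z, q z * L z h)]
    rw [Fintype.sum_prod_type_right]
    refine Finset.sum_congr rfl fun h _ => ?_
    rw [Finset.mul_sum]
    refine Finset.sum_congr rfl fun z _ => by ring
  have lhs_eq : ∑ ω, μ ω * (((1 / (m : ℝ)) * ∑ i, L (Zs ω i) (H ω)) - ∑ z, q z * L z (H ω)) =
      ∑ p : 𝒵 × ℋ, (P p.1 p.2 - q p.1 * pr μ H p.2) * L p.1 p.2 := by
    simp only [mul_sub, sub_mul, Finset.sum_sub_distrib, expA, expB]
  have sumD : ∑ p : 𝒵 × ℋ, (P p.1 p.2 - q p.1 * pr μ H p.2) = 0 := by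
    rw [Finset.sum_sub_distrib]
    rw [Fintype.sum_prod_type]
    have h1 : ∑ z, ∑ h, P z h = 1 := by
      simp only [margZ]; exact hq.2
    have h2 : ∑ p : 𝒵 × ℋ, q p.1 * pr μ H p.2 = 1 := by
      rw [Fintype.sum_prod_type]
      simp only [← Finset.mul_sum, ← Finset.sum_mul]
      rw [hq.2, pr_sum_eq_one μ hμ.2 H]; ring
    rw [h1, h2]; ring
  have rhs_eq : (1/2) * ∑ z, ∑ h, |P z h - (∑ h', P z h') * (∑ z', P z' h)| =
      (1/2) * ∑ p : 𝒵 × ℋ, |P p.1 p.2 - q p.1 * pr μ H p.2| := by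
    rw [Fintype.sum_prod_type]
    simp only [margZ, margH]
  rw [lhs_eq, rhs_eq]
  exact abs_sum_mul_le _ _ sumD fun p => hL p.1 p.2
end

section
/- There exists an observation space 𝒵, a distribution P(z), a learning algorithm 𝓛 mapping samples S_m to hypotheses H, and a [0,1]-valued parametric loss L(·;H) satisfying the Markov chain S_m → H → L(·;H), such that for all m ≥ 1 the expected generalization risk E[R_emp(H;S_m) − R_true(H)] = 0, yet P{|R_true(H) − R_emp(H;S_m)| = 1/2} = 1 for all m ≥ 1. -/
/-!
The learner memorises its sample and flips a fair coin deciding whether the hypothesis agrees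
with the target on the sample (loss `0`) or disagrees with it there (loss `1`). The sample is
finite, hence null for the atomless uniform distribution on `[0,1]`, so the true risk is always
`1/2`, while the empirical risk is `0` or `1` with probability `1/2` each. The generalization
gap is therefore `∓1/2`: its mean vanishes, but its absolute value is `1/2` almost surely.
-/

noncomputable section

open MeasureTheory Set unitInterval
open scoped ENNReal

namespace MeasureTheory.Measure

variable {α β γ : Type*} [MeasurableSpace α] [MeasurableSpace β] [MeasurableSpace γ]

theorem bind_map_eq_map_prod (μ : Measure α) (ν : Measure β) [SFinite ν] {f : α × β → γ}
    (hf : Measurable f) : μ.bind (fun a => ν.map fun b => f (a, b)) = (μ.prod ν).map f := by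
  have hf_left (a : α) : Measurable fun b => f (a, b) := hf.comp measurable_prodMk_left
  have hκ : Measurable fun a => ν.map fun b => f (a, b) := by
    refine measurable_of_measurable_coe _ fun t ht => ?_
    simp_rw [map_apply (hf_left _) ht]
    exact measurable_measure_prodMk_left (hf ht)
  ext t ht
  rw [bind_apply ht hκ.aemeasurable, map_apply hf ht, prod_apply (hf ht)]
  exact lintegral_congr fun a => map_apply (hf_left a) ht

end MeasureTheory.Measure

theorem measurableEmbedding_prodMk_graph {α β γ : Type*} [MeasurableSpace α]
    [MeasurableSpace β] [MeasurableSpace γ] [MeasurableEq γ] {g : α → γ} (hg : Measurable g) :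
    MeasurableEmbedding fun p : α × β => (p.1, (g p.1, p.2)) := by
  refine .of_measurable_inverse (g := fun q : α × γ × β => (q.1, q.2.2)) (by fun_prop) ?_
    (by fun_prop) fun p => rfl
  have h_range : range (fun p : α × β => (p.1, (g p.1, p.2))) = {q | q.2.1 = g q.1} := by
    ext ⟨a, c, b⟩
    constructor
    · rintro ⟨p, hp⟩
      simp only [Prod.mk.injEq] at hp
      obtain ⟨rfl, rfl, rfl⟩ := hp
      rfl
    · rintro (rfl : c = g a)
      exact ⟨(a, b), rfl⟩
  rw [h_range]
  exact measurableSet_eq_fun (by fun_prop) (by fun_prop)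

namespace GenGapCounterexample

def fairCoin : Measure Bool := (1 / 2 : ℝ≥0∞) • .dirac true + (1 / 2 : ℝ≥0∞) • .dirac false

instance : IsProbabilityMeasure fairCoin :=
  ⟨by simp [fairCoin, ENNReal.inv_two_add_inv_two]⟩

theorem integral_fairCoin (f : Bool → ℝ) : ∫ b, f b ∂fairCoin = (f true + f false) / 2 := by
  rw [integral_fintype .of_finite]
  simp [fairCoin, Measure.real, add_div, inv_mul_eq_div]

def pad {α : Type*} [Zero α] (m : ℕ) (s : Fin m → α) : ℕ → α :=
  fun n => if h : n < m then s ⟨n, h⟩ else 0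

theorem pad_val {α : Type*} [Zero α] {m : ℕ} (s : Fin m → α) (i : Fin m) : pad m s i = s i := by
  simp [pad]

@[fun_prop]
theorem measurable_pad {α : Type*} [Zero α] [MeasurableSpace α] (m : ℕ) :
    Measurable (pad (α := α) m) :=
  measurable_pi_lambda _ fun n => by
    by_cases h : n < m <;> simp [pad, h, measurable_pi_apply, measurable_const]

def memorize (m : ℕ) (s : Fin m → I) : Measure ((ℕ → I) × Bool) :=
  fairCoin.map fun b => (pad m s, b)

instance (m : ℕ) (s : Fin m → I) : IsProbabilityMeasure (memorize m s) :=
  Measure.isProbabilityMeasure_map measurable_prodMk_left.aemeasurable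

/-- `h.1` lists the points where the hypothesis is fixed, `h.2` records whether it agrees with the
target there; elsewhere it is uniformly random, so `1/2` is its expected `0-1` loss. -/
def loss (z : I) (h : (ℕ → I) × Bool) : ℝ :=
  open Classical in if z ∈ range h.1 then (if h.2 then 0 else 1) else 1 / 2

theorem loss_mem_Icc (z : I) (h : (ℕ → I) × Bool) : loss z h ∈ Icc (0 : ℝ) 1 := by
  unfold loss
  split_ifs <;> norm_num

theorem integral_loss (P : Measure I) [IsProbabilityMeasure P] [NullSingletonClass P]
    (h : (ℕ → I) × Bool) : ∫ z, loss z h ∂P = 1 / 2 := by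
  have h_off : ∀ᵐ z ∂P, z ∉ range h.1 :=
    measure_eq_zero_iff_ae_notMem.1 ((countable_range h.1).measure_zero P)
  have h_ae : (fun z => loss z h) =ᵐ[P] fun _ => 1 / 2 := h_off.mono fun z hz => if_neg hz
  rw [integral_congr_ae h_ae, integral_const]
  simp

theorem empirical_loss_pad {m : ℕ} (hm : m ≠ 0) (s : Fin m → I) (b : Bool) :
    1 / (m : ℝ) * ∑ i, loss (s i) (pad m s, b) = if b then 0 else 1 := by
  have h_on (i : Fin m) : loss (s i) (pad m s, b) = if b then 0 else 1 :=
    if_pos ⟨i, pad_val s i⟩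
  simp only [h_on, Finset.sum_const, Finset.card_univ, Fintype.card_fin, nsmul_eq_mul]
  field_simp

theorem generalization_gap_pad (P : Measure I) [IsProbabilityMeasure P] [NullSingletonClass P]
    {m : ℕ} (hm : m ≠ 0) (s : Fin m → I) (b : Bool) :
    1 / (m : ℝ) * ∑ i, loss (s i) (pad m s, b) - ∫ z, loss z (pad m s, b) ∂P
      = if b then -1 / 2 else 1 / 2 := by
  rw [empirical_loss_pad hm, integral_loss]
  split_ifs <;> norm_num

theorem bind_memorize {m : ℕ} (π : Measure (Fin m → I)) :
    π.bind (fun s => (memorize m s).map fun h => (s, h))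
      = (π.prod fairCoin).map fun p => (p.1, (pad m p.1, p.2)) := by
  rw [← Measure.bind_map_eq_map_prod _ _ (by fun_prop)]
  congr 1
  funext s
  exact Measure.map_map measurable_prodMk_left measurable_prodMk_left

end GenGapCounterexample

open GenGapCounterexample

/-- There exist an observation space `𝒵`, a distribution `P`, a (randomized)
learning algorithm `alg` mapping samples to distributions over hypotheses, and a
`[0,1]`-valued parametric loss `L` (which depends on the data only through the
hypothesis, so the Markov chain `S_m → H → L(·;H)` holds), such that for every
`m ≥ 1` the expected generalization gap is `0`, yet
`|R_true(H) − R_emp(H;S_m)| = 1/2` with probability one. -/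
theorem gen_in_expectation_not_in_probability :
    ∃ (𝒵 : Type) (_ : MeasurableSpace 𝒵) (P : Measure 𝒵) (_ : IsProbabilityMeasure P)
      (ℋ : Type) (_ : MeasurableSpace ℋ)
      (alg : (m : ℕ) → (Fin m → 𝒵) → Measure ℋ)
      (_ : ∀ m s, IsProbabilityMeasure (alg m s))
      (L : 𝒵 → ℋ → ℝ) (_ : ∀ z h, L z h ∈ Set.Icc (0:ℝ) 1),
      ∀ m : ℕ, 1 ≤ m →
        (∫ p : (Fin m → 𝒵) × ℋ,
            (((1 / (m : ℝ)) * ∑ i, L (p.1 i) p.2) - ∫ z, L z p.2 ∂P)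
          ∂((Measure.pi fun _ : Fin m => P).bind
              fun s => (alg m s).map fun h => (s, h))) = 0 ∧
        ((Measure.pi fun _ : Fin m => P).bind
              fun s => (alg m s).map fun h => (s, h))
          {p : (Fin m → 𝒵) × ℋ |
            |(∫ z, L z p.2 ∂P) - (1 / (m : ℝ)) * ∑ i, L (p.1 i) p.2| = 1/2} = 1 := by
  refine ⟨I, inferInstance, volume, inferInstance, (ℕ → I) × Bool, inferInstance, memorize,
    fun m s => inferInstance, loss, loss_mem_Icc, fun m hm => ?_⟩
  have h_gap (p : (Fin m → I) × Bool) := generalization_gap_pad volume (by omega) p.1 p.2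
  -- An embedding, so that pulling back along it needs no measurability of the gap.
  have h_embed := measurableEmbedding_prodMk_graph (β := Bool) (measurable_pad (α := I) m)
  rw [bind_memorize, h_embed.integral_map, h_embed.map_apply]
  constructor
  · simp only [h_gap]
    rw [integral_fun_snd (fun b : Bool => if b then (-1 / 2 : ℝ) else 1 / 2), integral_fairCoin]
    norm_num
  · rw [← measure_univ (μ := (Measure.pi fun _ : Fin m => (volume : Measure I)).prod fairCoin)]
    congr 1
    refine eq_univ_of_forall fun p => ?_
    rw [mem_preimage, mem_ofPred_eq, abs_sub_comm, h_gap]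
    split_ifs <;> norm_num
end
end
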